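/- For all σ ∈ ℕ⁺, there is a constant c = c(σ) ∈ ℕ⁺ such that every graph G with no induced minor isomorphic to K_{σ,σ} admits a c-edge-coloring of G-diameter less than 12σ. -/

import Mathlib

/-- The induced subgraph of `G` on `S` is nonempty and connected, expressed via
walks of `G` staying inside `S`. -/
def ConnectedIn {V : Type*} (G : SimpleGraph V) (S : Set V) : Prop :=
  S.Nonempty ∧ ∀ a ∈ S, ∀ b ∈ S, ∃ w : G.Walk a b, ∀ v ∈ w.support, v ∈ S

/-- An induced `H`-model in `G`: pairwise disjoint nonempty connected branch sets,
joined by an edge iff the corresponding vertices of `H` are adjacent. -/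
def IsInducedModel {W V : Type*} (H : SimpleGraph W) (G : SimpleGraph V) (X : W → Set V) : Prop :=
  (∀ w, ConnectedIn G (X w)) ∧
  (∀ w w', w ≠ w' → Disjoint (X w) (X w')) ∧
  (∀ w w', H.Adj w w' → ∃ a ∈ X w, ∃ b ∈ X w', G.Adj a b) ∧
  (∀ w w', w ≠ w' → ¬ H.Adj w w' → ∀ a ∈ X w, ∀ b ∈ X w', ¬ G.Adj a b)

/-- `G` has an induced minor isomorphic to `H`. -/
def InducedMinor {W V : Type*} (H : SimpleGraph W) (G : SimpleGraph V) : Prop :=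
  ∃ X : W → Set V, IsInducedModel H G X

/-- An `H`-model in `G` (for the minor relation). -/
def IsMinorModel {W V : Type*} (H : SimpleGraph W) (G : SimpleGraph V) (X : W → Set V) : Prop :=
  (∀ w, ConnectedIn G (X w)) ∧
  (∀ w w', w ≠ w' → Disjoint (X w) (X w')) ∧
  (∀ w w', H.Adj w w' → ∃ a ∈ X w, ∃ b ∈ X w', G.Adj a b)

/-- `G` has a minor isomorphic to `H`. -/
def HasMinor {W V : Type*} (H : SimpleGraph W) (G : SimpleGraph V) : Prop :=
  ∃ X : W → Set V, IsMinorModel H G X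

/-- `(T, β)` is a tree decomposition of `G`. -/
structure IsTreeDecomp {V ι : Type*} (G : SimpleGraph V) (T : SimpleGraph ι)
    (β : ι → Finset V) : Prop where
  tree : T.IsTree
  bags_connected : ∀ v : V, ConnectedIn T {i | v ∈ β i}
  edges_covered : ∀ u v : V, G.Adj u v → ∃ i, u ∈ β i ∧ v ∈ β i

/-- `G` has a tree decomposition of width at most `w`. -/
def TreewidthLE {V : Type*} (G : SimpleGraph V) (w : ℕ) : Prop :=
  ∃ (n : ℕ) (T : SimpleGraph (Fin n)) (β : Fin n → Finset V),
    IsTreeDecomp G T β ∧ ∀ i, (β i).card ≤ w + 1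

noncomputable def treewidth {V : Type*} (G : SimpleGraph V) : ℕ :=
  sInf {w | TreewidthLE G w}

/-- `G` has a path decomposition of width at most `w`. -/
def PathwidthLE {V : Type*} (G : SimpleGraph V) (w : ℕ) : Prop :=
  ∃ (n : ℕ) (β : Fin n → Finset V),
    IsTreeDecomp G (SimpleGraph.pathGraph n) β ∧ ∀ i, (β i).card ≤ w + 1

noncomputable def pathwidth {V : Type*} (G : SimpleGraph V) : ℕ :=
  sInf {w | PathwidthLE G w}

/-- A hereditary class of finite graphs (each finite graph is represented, up to
isomorphism, on some `Fin n`): the class is closed under induced subgraphs,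
i.e. under pulling back along injections. -/
def Hereditary (𝒢 : ∀ n : ℕ, SimpleGraph (Fin n) → Prop) : Prop :=
  ∀ (n m : ℕ) (G : SimpleGraph (Fin n)) (f : Fin m ↪ Fin n),
    𝒢 n G → 𝒢 m (G.comap ⇑f)

/-- A graph `J` is `ζ`-jagged if every induced subgraph with pathwidth at least 3
has at least `ζ` vertices of degree two (in that induced subgraph). -/
def Jagged {V : Type*} (ζ : ℕ) (J : SimpleGraph V) : Prop :=
  ∀ s : Set V, 3 ≤ pathwidth (J.induce s) →
    ζ ≤ {v | v ∈ s ∧ ({w | w ∈ s ∧ J.Adj v w}).ncard = 2}.ncard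

/-- A graph is `d`-degenerate if every nonempty induced subgraph has a vertex of
degree at most `d`. -/
def Degenerate {V : Type*} (d : ℕ) (G : SimpleGraph V) : Prop :=
  ∀ s : Set V, s.Nonempty → ∃ v ∈ s, ({w | w ∈ s ∧ G.Adj v w}).ncard ≤ d

/-- The complete binary tree of radius `ρ`: vertices are binary strings of length
at most `ρ`, and `x` is adjacent to `b :: x` (its children). -/
def binTree (ρ : ℕ) : SimpleGraph {l : List Bool // l.length ≤ ρ} where
  Adj x y := (∃ b : Bool, (x : List Bool) = b :: (y : List Bool)) ∨
             (∃ b : Bool, (y : List Bool) = b :: (x : List Bool))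
  symm := by constructor; rintro x y (h | h); exact Or.inr h; exact Or.inl h
  loopless := by
    constructor
    rintro x (⟨b, hb⟩ | ⟨b, hb⟩) <;>
      · have := congrArg List.length hb
        simp at this

/-- The `n × n` square grid graph. -/
def gridGraph (n : ℕ) : SimpleGraph (Fin n × Fin n) where
  Adj p q := (p.1 = q.1 ∧ ((p.2 : ℕ) + 1 = (q.2 : ℕ) ∨ (q.2 : ℕ) + 1 = (p.2 : ℕ))) ∨
             (p.2 = q.2 ∧ ((p.1 : ℕ) + 1 = (q.1 : ℕ) ∨ (q.1 : ℕ) + 1 = (p.1 : ℕ)))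
  symm := by
    constructor
    rintro p q (⟨h1, h2⟩ | ⟨h1, h2⟩)
    · exact Or.inl ⟨h1.symm, h2.symm⟩
    · exact Or.inr ⟨h1.symm, h2.symm⟩
  loopless := by constructor; rintro p (⟨_, h | h⟩ | ⟨_, h | h⟩) <;> omega

/-- A graph is planar iff it is isomorphic to a minor of some square grid. -/
def IsPlanar {W : Type*} (H : SimpleGraph W) : Prop :=
  ∃ n : ℕ, HasMinor H (gridGraph n)

/-- `S` is the vertex set of an induced path in `G` from `x` to `y`. -/
def IsInducedPathSet {V : Type*} (G : SimpleGraph V) (S : Set V) (x y : V) : Prop :=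
  ∃ p : G.Walk x y, p.IsPath ∧ {v | v ∈ p.support} = S ∧
    ∀ u v : V, u ∈ p.support → v ∈ p.support → G.Adj u v → p.toSubgraph.Adj u v

/-- `G` has a stable strong `(κ, lam)`-block: a stable set `B` of at least `κ`
vertices together with, for each unordered pair of distinct vertices of `B`,
at least `lam` pairwise internally disjoint induced paths joining them, such that
path systems of distinct pairs meet exactly in the shared endpoints. -/
def HasStableStrongBlock {V : Type*} (G : SimpleGraph V) (κ lam : ℕ) : Prop :=
  ∃ (B : Set V) (P : V → V → Fin lam → Set V),
    κ ≤ B.ncard ∧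
    (∀ x ∈ B, ∀ y ∈ B, x ≠ y → ¬ G.Adj x y) ∧
    (∀ x ∈ B, ∀ y ∈ B, x ≠ y →
      (∀ i, IsInducedPathSet G (P x y i) x y) ∧
      (∀ i j, i ≠ j → ∀ v, v ∈ P x y i → v ∈ P x y j → v = x ∨ v = y) ∧
      (∀ i, P x y i = P y x i)) ∧
    (∀ x ∈ B, ∀ y ∈ B, ∀ x' ∈ B, ∀ y' ∈ B, x ≠ y → x' ≠ y' →
      ({x, y} : Set V) ≠ {x', y'} →
      (⋃ i, P x y i) ∩ (⋃ i, P x' y' i) = (({x, y} : Set V) ∩ {x', y'}))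

/-- `G` is `(κ, lam)`-separable: there is no stable strong `(κ, lam)`-block in `G`. -/
def Separable {V : Type*} (G : SimpleGraph V) (κ lam : ℕ) : Prop :=
  ¬ HasStableStrongBlock G κ lam

/-- In the tree `T` rooted at `u`, `w` is a child of `v`. -/
def IsChild {α : Type*} (T : SimpleGraph α) (u v w : α) : Prop :=
  T.Adj v w ∧ T.dist u w = T.dist u v + 1

/-- `(T, u)` is a `(δ, ρ)`-regular rooted tree: `T` is a tree, every vertex is at
distance at most `ρ` from `u`, and every vertex at distance less than `ρ` from `u`
has exactly `δ` children. -/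
def RootedRegular {α : Type*} (T : SimpleGraph α) (u : α) (δ ρ : ℕ) : Prop :=
  T.IsTree ∧ (∀ v, T.dist u v ≤ ρ) ∧
    ∀ v, T.dist u v < ρ → {w | IsChild T u v w}.ncard = δ

/-- The rooted tree induced by `T` on `s`, with root `r`, is a rooted subtree of
`(T, u)`: it is a tree and every child relation in it is a child relation in `(T, u)`. -/
def IsRootedSubtree {α : Type*} (T : SimpleGraph α) (u : α) (s : Set α) (r : ↥s) : Prop :=
  (T.induce s).IsTree ∧
    ∀ v w : ↥s, IsChild (T.induce s) r v w → IsChild T u (↑v) (↑w)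

open Classical in
/-- The `i`-ancestor of `v` in the tree `T` rooted at `u`: the vertex on the unique
`u`–`v` path at distance `i` from `v`. -/
noncomputable def ancestor {α : Type*} (T : SimpleGraph α) (u v : α) (i : ℕ) : α :=
  if h : ∃ w, T.dist u w + i = T.dist u v ∧ T.dist w v = i then h.choose else v

/-- The rooted tree `T` (mapped into `G` by `f`) is path-uniform in `G`. -/
def PathUniform {V β : Type*} (G : SimpleGraph V) (f : β → V) (T : SimpleGraph β)
    (r : β) (ρ : ℕ) : Prop :=
  ∀ v v' : β, T.dist r v = ρ → T.dist r v' = ρ → ∀ i j : ℕ, i ≤ ρ → j ≤ ρ →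
    (G.Adj (f (ancestor T r v i)) (f (ancestor T r v j)) ↔
      G.Adj (f (ancestor T r v' i)) (f (ancestor T r v' j)))

/-- The rooted tree `T` (mapped into `G` by `f`) is path-induced in `G`. -/
def PathInduced {V β : Type*} (G : SimpleGraph V) (f : β → V) (T : SimpleGraph β)
    (r : β) (ρ : ℕ) : Prop :=
  ∀ v : β, T.dist r v = ρ → ∀ i j : ℕ, i ≤ ρ → j ≤ ρ →
    (G.Adj (f (ancestor T r v i)) (f (ancestor T r v j)) ↔ (i + 1 = j ∨ j + 1 = i))

/-- The rooted tree `T` (mapped into `G` by `f`) is branch-induced in `G`: every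
`G`-edge between vertices of `T` that is not a `T`-edge joins a vertex to one of
its ancestors. -/
def BranchInduced {V β : Type*} (G : SimpleGraph V) (f : β → V) (T : SimpleGraph β)
    (r : β) : Prop :=
  ∀ v w : β, G.Adj (f v) (f w) → ¬ T.Adj v w →
    (T.dist r v + T.dist v w = T.dist r w ∨ T.dist r w + T.dist w v = T.dist r v)

/-- `G` has a (not necessarily induced) subgraph isomorphic to `H`. -/
def HasSubgraphIso {W V : Type*} (H : SimpleGraph W) (G : SimpleGraph V) : Prop :=
  ∃ f : W → V, Function.Injective f ∧ ∀ a b, H.Adj a b → G.Adj (f a) (f b)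

/-- The spanning subgraph of `G` consisting of the edges of color `i` under the
edge-coloring `F`. -/
def colorSub {V : Type*} {c : ℕ} (G : SimpleGraph V) (F : V → V → Fin c) (i : Fin c) :
    SimpleGraph V where
  Adj u v := G.Adj u v ∧ F u v = i ∧ F v u = i
  symm := by constructor; rintro u v ⟨h1, h2, h3⟩; exact ⟨h1.symm, h3, h2⟩
  loopless := by constructor; rintro u ⟨h, _, _⟩; exact (G.ne_of_adj h) rfl

/-- Distance from `a` to `b` within the induced subgraph `G[S]` (via walks of `G`
all of whose vertices lie in `S`). -/
noncomputable def distIn {V : Type*} (G : SimpleGraph V) (S : Set V) (a b : V) : ℕ :=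
  sInf {n | ∃ w : G.Walk a b, w.length = n ∧ ∀ v ∈ w.support, v ∈ S}

/-- `(a 0, …, a (σ+1))` is a `(σ, θ)`-`X`-abyss in `G`. -/
def IsAbyss {V : Type*} (G : SimpleGraph V) (X : Set V) (σ θ : ℕ) (a : ℕ → V) : Prop :=
  ∃ (S : ℕ → Set V) (ρ : ℕ → ℕ),
    S 0 ⊆ X ∧ ConnectedIn G (S 0) ∧ (∀ k ≤ σ + 1, a k ∈ S 0) ∧
    (∀ i < σ,
      S (i + 1) ⊆ {v | v ∈ S i ∧ distIn G (S i) (a i) v = ρ i + 1} ∧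
      ConnectedIn G (S (i + 1)) ∧
      ∀ k, i + 1 ≤ k → k ≤ σ + 1 → a k ∈ S (i + 1)) ∧
    θ ≤ G.dist (a σ) (a (σ + 1))

/-- The torso of a tree decomposition `(T, β)` of `G` at the node `x`. -/
def torso {V ι : Type*} (G : SimpleGraph V) (T : SimpleGraph ι) (β : ι → Finset V)
    (x : ι) : SimpleGraph {v : V // v ∈ β x} where
  Adj u v := u ≠ v ∧ (G.Adj ↑u ↑v ∨ ∃ y, T.Adj x y ∧ ↑u ∈ β y ∧ ↑v ∈ β y)
  symm := by
    constructor
    rintro u v ⟨hne, h | ⟨y, hy, h1, h2⟩⟩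
    · exact ⟨hne.symm, Or.inl h.symm⟩
    · exact ⟨hne.symm, Or.inr ⟨y, hy, h2, h1⟩⟩
  loopless := by constructor; rintro u ⟨hne, _⟩; exact hne rfl

/-- The vertex set of the component of `T - x` containing `y` (denoted `T_{y∖x}`). -/
def compAway {ι : Type*} (T : SimpleGraph ι) (y x : ι) : Set ι :=
  {z | ∃ w : T.Walk y z, x ∉ w.support}

/-- A tree decomposition `(T, β)` of `G` is tight. -/
def Tight {V ι : Type*} (G : SimpleGraph V) (T : SimpleGraph ι) (β : ι → Finset V) : Prop :=
  ∀ x y, T.Adj x y →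
    ∃ v₀ ∈ (⋃ z ∈ compAway T y x, (β z : Set V)) \ (⋃ z ∈ compAway T x y, (β z : Set V)),
      ∀ u : V, u ∈ β x → u ∈ β y →
        ∃ c : V, G.Adj u c ∧ ∃ w : G.Walk v₀ c, ∀ p ∈ w.support,
          p ∈ (⋃ z ∈ compAway T y x, (β z : Set V)) \ (⋃ z ∈ compAway T x y, (β z : Set V))

/-- `G` has a subgraph isomorphic to some subdivision of the complete graph `K_μ`:
equivalently, there are `μ` branch vertices joined by pairwise internally disjoint
paths of nonzero length. -/
def HasKSubdivision {V : Type*} (μ : ℕ) (G : SimpleGraph V) : Prop :=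
  ∃ b : Fin μ → V, Function.Injective b ∧
    ∃ P : ∀ i j : Fin μ, i < j → G.Walk (b i) (b j),
      (∀ i j (h : i < j), (P i j h).IsPath) ∧
      (∀ i j (h : i < j), ∀ m : Fin μ, b m ∈ (P i j h).support → m = i ∨ m = j) ∧
      (∀ i j (h : i < j), ∀ k l (h' : k < l), (i, j) ≠ (k, l) →
        ∀ v : V, v ∈ (P i j h).support → v ∈ (P k l h').support →
          (v = b i ∨ v = b j) ∧ (v = b k ∨ v = b l))

/-!
For an edge `uv` we build a decreasing sequence of vertex sets: `chain 0` is the component of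
`u`, and `chain (d + 1)` is the component of `u` in the band of two consecutive levels of
`chain d` (distances inside `chain d` from a fixed basepoint) containing `u` and `v`. The colour
of `uv` is the sequence of the lower levels of `uv` modulo `4` for `d < σ`. Two adjacent edges of
the same colour have the same chains, because both lower levels are within one of the level of
the common vertex; so a monochromatic component lies in `chain σ` of any of its edges.

If some lower level is below `2`, that chain stays within distance `2` of a basepoint. Otherwise
the chains are nested bands of depth at least `2`, and two vertices of `chain σ` at distance
`6σ` yield an induced `K_{σ,σ}`: in each `chain i` the ball of radius two less than the lower
level around the basepoint is connected, these balls are pairwise disjoint and anticomplete, and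
`σ` points spaced `6` apart on a path inside `chain σ` each reach every ball by a path of length
at most `3`.
-/
open SimpleGraph

section ReachableIn

variable {V : Type*} {G : SimpleGraph V} {S : Set V} {a b c u v : V}

def ReachableIn (G : SimpleGraph V) (S : Set V) (a b : V) : Prop :=
  ∃ p : G.Walk a b, ∀ x ∈ p.support, x ∈ S

theorem ReachableIn.refl (ha : a ∈ S) : ReachableIn G S a a :=
  ⟨.nil, by simpa using ha⟩

theorem ReachableIn.symm (h : ReachableIn G S a b) : ReachableIn G S b a := by
  obtain ⟨p, hp⟩ := h
  exact ⟨p.reverse, fun x hx => hp x (by simpa using hx)⟩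

theorem ReachableIn.trans (h : ReachableIn G S a b) (h' : ReachableIn G S b c) :
    ReachableIn G S a c := by
  obtain ⟨p, hp⟩ := h
  obtain ⟨q, hq⟩ := h'
  refine ⟨p.append q, fun x hx => ?_⟩
  rw [Walk.mem_support_append_iff] at hx
  exact hx.elim (hp x) (hq x)

theorem ReachableIn.mem_left (h : ReachableIn G S a b) : a ∈ S := by
  obtain ⟨p, hp⟩ := h
  exact hp a p.start_mem_support

theorem ReachableIn.mem_right (h : ReachableIn G S a b) : b ∈ S :=
  h.symm.mem_left

theorem ReachableIn.concat (h : ReachableIn G S a u) (huv : G.Adj u v) (hv : v ∈ S) :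
    ReachableIn G S a v :=
  h.trans ⟨huv.toWalk, by simp [h.mem_right, hv]⟩

theorem ReachableIn.reachable (h : ReachableIn G S a b) : G.Reachable a b :=
  h.elim fun p _ => ⟨p⟩

theorem reachableIn_univ_iff : ReachableIn G Set.univ a b ↔ G.Reachable a b :=
  ⟨ReachableIn.reachable, fun ⟨p⟩ => ⟨p, fun _ _ => trivial⟩⟩

theorem ReachableIn.of_mem_support {p : G.Walk a b} (hp : ∀ x ∈ p.support, x ∈ S)
    (hv : v ∈ p.support) : ReachableIn G S a v := by
  classical
  exact ⟨p.takeUntil v hv, fun x hx => hp x (p.support_takeUntil_subset_support hv hx)⟩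

theorem ReachableIn.reachableIn_setOf (h : ReachableIn G S a b) :
    ReachableIn G {x | ReachableIn G S a x} a b := by
  obtain ⟨p, hp⟩ := h
  exact ⟨p, fun x hx => ReachableIn.of_mem_support hp hx⟩

theorem ReachableIn.setOf_eq (h : ReachableIn G S a b) :
    {x | ReachableIn G S a x} = {x | ReachableIn G S b x} :=
  Set.ext fun _ => ⟨h.symm.trans, h.trans⟩

theorem connectedIn_of_forall_reachableIn (hS : ∀ x ∈ S, ReachableIn G S c x) (hc : c ∈ S) :
    ConnectedIn G S :=
  ⟨⟨c, hc⟩, fun x hx y hy => (hS x hx).symm.trans (hS y hy)⟩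

end ReachableIn

section distIn

variable {V : Type*} {G : SimpleGraph V} {S : Set V} {a b u v : V} {k : ℕ}

theorem distIn_le_length {p : G.Walk a b} (hp : ∀ x ∈ p.support, x ∈ S) :
    distIn G S a b ≤ p.length := by
  unfold distIn
  exact Nat.sInf_le ⟨p, rfl, hp⟩

theorem ReachableIn.exists_walk_length_eq_distIn (h : ReachableIn G S a b) :
    ∃ p : G.Walk a b, p.length = distIn G S a b ∧ ∀ x ∈ p.support, x ∈ S := by
  unfold distIn
  obtain ⟨p, hp⟩ := h
  exact Nat.sInf_mem (s := {n | ∃ q : G.Walk a b, q.length = n ∧ ∀ x ∈ q.support, x ∈ S})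
    ⟨p.length, p, rfl, hp⟩

theorem distIn_self (ha : a ∈ S) : distIn G S a a = 0 :=
  Nat.le_zero.mp (distIn_le_length (p := .nil) (by simpa using ha))

theorem ReachableIn.dist_le_distIn (h : ReachableIn G S a b) : G.dist a b ≤ distIn G S a b := by
  obtain ⟨p, hpl, -⟩ := h.exists_walk_length_eq_distIn
  exact hpl ▸ dist_le p

theorem ReachableIn.distIn_le_add_one (h : ReachableIn G S a u) (huv : G.Adj u v) (hv : v ∈ S) :
    distIn G S a v ≤ distIn G S a u + 1 := by
  obtain ⟨p, hpl, hp⟩ := h.exists_walk_length_eq_distIn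
  rw [← hpl, ← p.length_concat huv]
  refine distIn_le_length fun x hx => ?_
  rw [Walk.support_concat, List.mem_append, List.mem_singleton] at hx
  exact hx.elim (hp x) fun hxv => hxv ▸ hv

theorem ReachableIn.exists_adj_distIn_eq (h : ReachableIn G S a b) (hd : distIn G S a b = k + 1) :
    ∃ p, G.Adj p b ∧ ReachableIn G S a p ∧ distIn G S a p = k := by
  obtain ⟨p, hpl, hp⟩ := h.exists_walk_length_eq_distIn
  have hnil : ¬ p.Nil := by rw [← Walk.length_eq_zero_iff]; omega
  have hq : ∀ x ∈ p.dropLast.support, x ∈ S := fun x hx =>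
    hp x (by rw [← Walk.support_dropLast_concat hnil]; exact List.mem_append_left _ hx)
  refine ⟨p.penultimate, p.adj_penultimate hnil, ⟨p.dropLast, hq⟩, le_antisymm ?_ ?_⟩
  · have := distIn_le_length hq
    have := p.length_dropLast_add_one hnil
    omega
  · have := (ReachableIn.distIn_le_add_one ⟨p.dropLast, hq⟩ (p.adj_penultimate hnil)
      h.mem_right)
    omega

theorem ReachableIn.exists_walk_forall_distIn_le (h : ReachableIn G S a b) :
    ∃ p : G.Walk a b, ∀ x ∈ p.support, x ∈ S ∧ distIn G S a x ≤ distIn G S a b := by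
  classical
  obtain ⟨p, hpl, hp⟩ := h.exists_walk_length_eq_distIn
  refine ⟨p, fun x hx => ⟨hp x hx, ?_⟩⟩
  calc distIn G S a x ≤ (p.takeUntil x hx).length :=
        distIn_le_length fun y hy => hp y (p.support_takeUntil_subset_support hx hy)
    _ ≤ p.length := p.length_takeUntil_le_length hx
    _ = distIn G S a b := hpl

theorem connectedIn_setOf_distIn_le (hS : ∀ x ∈ S, ReachableIn G S a x) (ha : a ∈ S) (r : ℕ) :
    ConnectedIn G {x ∈ S | distIn G S a x ≤ r} := by
  refine connectedIn_of_forall_reachableIn (fun x hx => ?_) ⟨ha, by simp [distIn_self ha]⟩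
  obtain ⟨p, hp⟩ := (hS x hx.1).exists_walk_forall_distIn_le
  exact ⟨p, fun y hy => ⟨(hp y hy).1, (hp y hy).2.trans hx.2⟩⟩

theorem ne_and_not_adj_of_distIn_add_two_le (hx : ReachableIn G S a u) (hv : v ∈ S)
    (h : distIn G S a u + 2 ≤ distIn G S a v) : u ≠ v ∧ ¬ G.Adj u v :=
  ⟨by rintro rfl; omega, fun huv => by have := hx.distIn_le_add_one huv hv; omega⟩

end distIn

namespace SimpleGraph

variable {V : Type*} {G : SimpleGraph V} {u v w x y : V}

theorem Adj.dist_le_dist_add_one (hvw : G.Adj v w) (u : V) : G.dist u w ≤ G.dist u v + 1 := by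
  rcases hvw.diff_dist_adj (u := u) with h | h | h <;> omega

theorem ne_and_not_adj_of_two_le_dist (h : 2 ≤ G.dist u v) : u ≠ v ∧ ¬ G.Adj u v :=
  ⟨by rintro rfl; simp at h, fun huv => by simp [dist_eq_one_iff_adj.mpr huv] at h⟩

theorem Reachable.dist_le_dist_add_dist_add_dist (hux : G.Reachable u x) (hyv : G.Reachable y v) :
    G.dist u v ≤ G.dist u x + G.dist x y + G.dist y v := by
  have := hux.dist_triangle_left v
  have := hyv.dist_triangle_right x
  omega

theorem Walk.exists_mem_support_eq (f : V → ℕ) (hf : ∀ x y, G.Adj x y → f y ≤ f x + 1) :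
    ∀ {a b : V} (p : G.Walk a b) {t : ℕ}, f a ≤ t → t ≤ f b → ∃ z ∈ p.support, f z = t
  | _, _, .nil, _, h₁, h₂ => ⟨_, Walk.start_mem_support _, le_antisymm h₁ h₂⟩
  | a, _, .cons hadj p, t, h₁, h₂ => by
    by_cases hat : f a = t
    · exact ⟨a, by simp, hat⟩
    · obtain ⟨z, hz, hzt⟩ := exists_mem_support_eq f hf p ((hf _ _ hadj).trans (by omega)) h₂
      exact ⟨z, by simp [hz], hzt⟩

end SimpleGraph

theorem inducedMinor_completeBipartiteGraph {V ι κ : Type*} {G : SimpleGraph V}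
    (A : ι → Set V) (B : κ → Set V) (hA : ∀ i, ConnectedIn G (A i))
    (hB : ∀ m, ConnectedIn G (B m))
    (hAA : ∀ i j, i ≠ j → ∀ x ∈ A i, ∀ y ∈ A j, x ≠ y ∧ ¬ G.Adj x y)
    (hBB : ∀ m n, m ≠ n → ∀ x ∈ B m, ∀ y ∈ B n, x ≠ y ∧ ¬ G.Adj x y)
    (hAB : ∀ i m, ∀ x ∈ A i, x ∉ B m) (hadj : ∀ i m, ∃ x ∈ A i, ∃ y ∈ B m, G.Adj x y) :
    InducedMinor (completeBipartiteGraph ι κ) G := by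
  refine ⟨Sum.elim A B, ?_, ?_, ?_, ?_⟩
  · rintro (i | m)
    exacts [hA i, hB m]
  · rintro (i | m) (j | n) hne <;> rw [Set.disjoint_left]
    · exact fun x hx hx' => (hAA i j (by simpa using hne) x hx x hx').1 rfl
    · exact hAB i n
    · exact fun x hx hx' => hAB j m x hx' hx
    · exact fun x hx hx' => (hBB m n (by simpa using hne) x hx x hx').1 rfl
  · rintro (i | m) (j | n) h
    · simp at h
    · exact hadj i n
    · obtain ⟨x, hx, y, hy, hxy⟩ := hadj j m
      exact ⟨y, hy, x, hx, hxy.symm⟩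
    · simp at h
  · rintro (i | m) (j | n) hne hnadj x hx y hy
    · exact (hAA i j (by simpa using hne) x hx y hy).2
    · simp at hnadj
    · simp at hnadj
    · exact (hBB m n (by simpa using hne) x hx y hy).2

section

variable {V : Type*} {G : SimpleGraph V} {S : Set V} {c w x y : V}

theorem ReachableIn.exists_descent {μ : ℕ} (hw : ReachableIn G S c w) (hμ : 2 ≤ μ)
    (hlev : distIn G S c w = μ ∨ distIn G S c w = μ + 1) :
    ∃ p q t, G.Adj q w ∧ (p = q ∨ G.Adj p q) ∧ G.Adj t p ∧
      ReachableIn G S c p ∧ distIn G S c p + 1 = μ ∧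
      ReachableIn G S c t ∧ distIn G S c t + 2 = μ := by
  obtain ⟨k, rfl⟩ : ∃ k, μ = k + 2 := ⟨μ - 2, by omega⟩
  rcases hlev with hlev | hlev
  · obtain ⟨q, hqw, hq, hql⟩ := hw.exists_adj_distIn_eq hlev
    obtain ⟨t, htq, ht, htl⟩ := hq.exists_adj_distIn_eq hql
    exact ⟨q, q, t, hqw, .inl rfl, htq, hq, by omega, ht, by omega⟩
  · obtain ⟨q, hqw, hq, hql⟩ := hw.exists_adj_distIn_eq hlev
    obtain ⟨p, hpq, hp, hpl⟩ := hq.exists_adj_distIn_eq hql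
    obtain ⟨t, htp, ht, htl⟩ := hp.exists_adj_distIn_eq hpl
    exact ⟨p, q, t, hqw, .inr hpq, htp, hp, by omega, ht, by omega⟩

theorem ReachableIn.exists_far_points {d n : ℕ} (h : ReachableIn G S x y)
    (hxy : d * n ≤ G.dist x y) :
    ∃ W : Fin n → V, (∀ m, W m ∈ S) ∧ ∀ m m', m ≠ m' → d ≤ G.dist (W m) (W m') := by
  have hpt (m : Fin n) : ∃ z, ReachableIn G S x z ∧ G.dist x z = d * m := by
    obtain ⟨p, hp⟩ := h
    obtain ⟨z, hz, hzd⟩ := p.exists_mem_support_eq (G.dist x)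
      (fun _ _ hadj => hadj.dist_le_dist_add_one x) (t := d * m) (by simp)
      (le_trans (Nat.mul_le_mul_left d m.2.le) hxy)
    exact ⟨z, .of_mem_support hp hz, hzd⟩
  choose W hW hWd using hpt
  refine ⟨W, fun m => (hW m).mem_right, fun m m' hmm' => ?_⟩
  have h₁ := (hW m).reachable.dist_triangle_left (W m')
  have h₂ := (hW m').reachable.dist_triangle_left (W m)
  rw [dist_comm (u := W m')] at h₂
  have := hWd m
  have := hWd m'
  rcases Nat.lt_or_gt_of_ne (Fin.val_ne_of_ne hmm') with hlt | hlt <;>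
  · have := Nat.mul_le_mul_left d (Nat.succ_le_of_lt hlt)
    rw [Nat.mul_succ] at this
    omega

theorem exists_walk_length_le_two_of_mem {ι : Type*} {p q : ι → V} (hq : ∀ i, G.Adj (q i) w)
    (hpq : ∀ i, p i = q i ∨ G.Adj (p i) (q i)) (hx : x ∈ insert w (⋃ i, {p i, q i})) :
    ∃ r : G.Walk w x, r.length ≤ 2 ∧ ∀ z ∈ r.support, z ∈ insert w (⋃ i, {p i, q i}) := by
  set X := insert w (⋃ i, {p i, q i})
  have hwX : w ∈ X := Set.mem_insert _ _
  have hpX (i) : p i ∈ X := Set.mem_insert_of_mem _ (Set.mem_iUnion.mpr ⟨i, by simp⟩)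
  have hqX (i) : q i ∈ X := Set.mem_insert_of_mem _ (Set.mem_iUnion.mpr ⟨i, by simp⟩)
  have hqr (i) : ∃ r : G.Walk w (q i), r.length ≤ 2 ∧ ∀ z ∈ r.support, z ∈ X :=
    ⟨(hq i).symm.toWalk, by simp, by simp [hwX, hqX i]⟩
  rcases Set.mem_insert_iff.mp hx with rfl | hx
  · exact ⟨.nil, by simp, by simpa using hwX⟩
  obtain ⟨i, rfl | rfl⟩ : ∃ i, x = p i ∨ x = q i := by simpa using hx
  · rcases hpq i with hpq | hpq
    · exact hpq ▸ hqr i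
    · exact ⟨.cons (hq i).symm hpq.symm.toWalk, by simp, by simp [hwX, hqX i, hpX i]⟩
  · exact hqr i

end

section IsLayering

variable {V : Type*} {G : SimpleGraph V} {σ : ℕ} {S : ℕ → Set V} {a : ℕ → V} {μ : ℕ → ℕ}
  {i j : ℕ} {x y : V}

structure IsLayering (G : SimpleGraph V) (σ : ℕ) (S : ℕ → Set V) (a : ℕ → V) (μ : ℕ → ℕ) :
    Prop where
  reachableIn : ∀ i ≤ σ, ∀ x ∈ S i, ReachableIn G (S i) (a i) x
  subset_band : ∀ i < σ, ∀ x ∈ S (i + 1),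
    x ∈ S i ∧ (distIn G (S i) (a i) x = μ i ∨ distIn G (S i) (a i) x = μ i + 1)
  two_le : ∀ i < σ, 2 ≤ μ i

def innerBall (G : SimpleGraph V) (S : ℕ → Set V) (a : ℕ → V) (μ : ℕ → ℕ) (i : ℕ) : Set V :=
  {x ∈ S i | distIn G (S i) (a i) x ≤ μ i - 2}

namespace IsLayering

variable (L : IsLayering G σ S a μ)
include L

theorem subset_of_le (hij : i ≤ j) (hj : j ≤ σ) : S j ⊆ S i := by
  induction j, hij using Nat.le_induction with
  | base => exact subset_rfl
  | succ j hij ih => exact fun x hx => ih (by omega) (L.subset_band j (by omega) x hx).1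

theorem le_distIn (hij : i < j) (hj : j ≤ σ) (hx : x ∈ S j) :
    x ∈ S i ∧ μ i ≤ distIn G (S i) (a i) x := by
  have := L.subset_band i (by omega) x (L.subset_of_le hij hj hx)
  exact ⟨this.1, by omega⟩

theorem connectedIn_innerBall (hi : i ≤ σ) (hx : x ∈ S σ) : ConnectedIn G (innerBall G S a μ i) :=
  connectedIn_setOf_distIn_le (L.reachableIn i hi)
    (L.reachableIn i hi x (L.subset_of_le hi le_rfl hx)).mem_left _

theorem ne_and_not_adj_of_mem_innerBall (hi : i < σ) (hx : x ∈ innerBall G S a μ i)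
    (hy : y ∈ S j) (hij : i < j) (hj : j ≤ σ) : x ≠ y ∧ ¬ G.Adj x y := by
  obtain ⟨hyi, hyl⟩ := L.le_distIn hij hj hy
  have := L.two_le i hi
  exact ne_and_not_adj_of_distIn_add_two_le (L.reachableIn i hi.le x hx.1) hyi
    (by have := hx.2; omega)

theorem ne_and_not_adj_of_mem_innerBall_of_ne (hi : i < σ) (hj : j < σ) (hij : i ≠ j)
    (hx : x ∈ innerBall G S a μ i) (hy : y ∈ innerBall G S a μ j) : x ≠ y ∧ ¬ G.Adj x y := by
  rcases Nat.lt_or_gt_of_ne hij with hij | hij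
  · exact L.ne_and_not_adj_of_mem_innerBall hi hx hy.1 hij hj.le
  · obtain ⟨hne, hadj⟩ := L.ne_and_not_adj_of_mem_innerBall hj hy hx.1 hij hi.le
    exact ⟨hne.symm, fun h => hadj h.symm⟩

theorem not_mem_innerBall_of_distIn_eq (hi : i < σ) (hj : j < σ) (hx : x ∈ S i)
    (hxl : distIn G (S i) (a i) x + 1 = μ i) : x ∉ innerBall G S a μ j := by
  intro hxj
  rcases lt_trichotomy i j with hij | rfl | hij
  · have := (L.subset_band i hi x (L.subset_of_le (i := i + 1) hij hj.le hxj.1)).2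
    omega
  · have := hxj.2
    have := L.two_le i hi
    omega
  · exact (L.ne_and_not_adj_of_mem_innerBall hj hxj hx hij hi.le).1 rfl

theorem inducedMinor_of_pairwise_far {W : Fin σ → V} (hW : ∀ m, W m ∈ S σ)
    (hWW : ∀ m m', m ≠ m' → 6 ≤ G.dist (W m) (W m')) :
    InducedMinor (completeBipartiteGraph (Fin σ) (Fin σ)) G := by
  have hW' (i m : Fin σ) : W m ∈ S (i + 1) := L.subset_of_le i.2 le_rfl (hW m)
  choose p q t hqW hpq htp hp hpl ht htl using fun i m : Fin σ =>
    (L.reachableIn i i.2.le (W m) (L.subset_band i i.2 _ (hW' i m)).1).exists_descent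
      (L.two_le i i.2) (L.subset_band i i.2 _ (hW' i m)).2
  set B : Fin σ → Set V := fun m => insert (W m) (⋃ i, {p i m, q i m})
  have hB (m : Fin σ) {x : V} (hx : x ∈ B m) :=
    exists_walk_length_le_two_of_mem (hqW · m) (hpq · m) hx
  refine inducedMinor_completeBipartiteGraph (fun i => innerBall G S a μ i) B
    (fun i => L.connectedIn_innerBall i.2.le (hW i))
    (fun m => connectedIn_of_forall_reachableIn
      (fun x hx => (hB m hx).elim fun r hr => ⟨r, hr.2⟩) (Set.mem_insert _ _))
    (fun i j hij x hx y hy =>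
      L.ne_and_not_adj_of_mem_innerBall_of_ne i.2 j.2 (Fin.val_ne_of_ne hij) hx hy)
    (fun m n hmn x hx y hy => ?_) (fun i m x hx hxB => ?_) (fun i m => ?_)
  · obtain ⟨r, hr, -⟩ := hB m hx
    obtain ⟨r', hr', -⟩ := hB n hy
    have := Reachable.dist_le_dist_add_dist_add_dist ⟨r⟩ ⟨r'.reverse⟩ (x := x) (y := y)
    rw [dist_comm (u := y)] at this
    have := dist_le r
    have := dist_le r'
    have := hWW m n hmn
    exact ne_and_not_adj_of_two_le_dist (by omega)
  · simp only [B, Set.mem_insert_iff, Set.mem_iUnion, Set.mem_singleton_iff] at hxB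
    rcases hxB with rfl | ⟨k, rfl | rfl⟩
    · exact (L.ne_and_not_adj_of_mem_innerBall i.2 hx (hW m) i.2 le_rfl).1 rfl
    · exact L.not_mem_innerBall_of_distIn_eq k.2 i.2 (hp k m).mem_right (hpl k m) hx
    · exact (L.ne_and_not_adj_of_mem_innerBall i.2 hx (hW m) i.2 le_rfl).2 (hqW k m)
  · refine ⟨t i m, ⟨(ht i m).mem_right, by have := htl i m; omega⟩, p i m, ?_, htp i m⟩
    exact Set.mem_insert_of_mem _ (Set.mem_iUnion.mpr ⟨i, by simp⟩)

theorem inducedMinor (hx : x ∈ S σ) (hy : y ∈ S σ) (hxy : 6 * σ ≤ G.dist x y) :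
    InducedMinor (completeBipartiteGraph (Fin σ) (Fin σ)) G := by
  obtain ⟨W, hW, hWW⟩ := ((L.reachableIn σ le_rfl x hx).symm.trans
    (L.reachableIn σ le_rfl y hy)).exists_far_points hxy
  exact L.inducedMinor_of_pairwise_far hW hWW

end IsLayering

end IsLayering

section Chain

variable {V : Type*} [Nonempty V] {G : SimpleGraph V} {T : Set V} {u v w z x : V} {d σ : ℕ}

noncomputable def basepoint (T : Set V) : V :=
  Classical.epsilon (· ∈ T)

theorem basepoint_mem (h : T.Nonempty) : basepoint T ∈ T :=
  Classical.epsilon_spec h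

noncomputable def level (G : SimpleGraph V) (T : Set V) (x : V) : ℕ :=
  distIn G T (basepoint T) x

def band (G : SimpleGraph V) (T : Set V) (k : ℕ) : Set V :=
  {x ∈ T | level G T x = k ∨ level G T x = k + 1}

noncomputable def chain (G : SimpleGraph V) (u v : V) : ℕ → Set V
  | 0 => {x | G.Reachable u x}
  | d + 1 => {x | ReachableIn G (band G (chain G u v d)
      (min (level G (chain G u v d) u) (level G (chain G u v d) v))) u x}

noncomputable def edgeLevel (G : SimpleGraph V) (u v : V) (d : ℕ) : ℕ :=
  min (level G (chain G u v d) u) (level G (chain G u v d) v)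

theorem chain_succ :
    chain G u v (d + 1) = {x | ReachableIn G (band G (chain G u v d) (edgeLevel G u v d)) u x} :=
  rfl

theorem chain_succ_subset_band :
    chain G u v (d + 1) ⊆ band G (chain G u v d) (edgeLevel G u v d) :=
  fun _ hx => ReachableIn.mem_right hx

theorem reachableIn_chain (hx : x ∈ chain G u v d) : ReachableIn G (chain G u v d) u x := by
  cases d with
  | zero =>
    show ReachableIn G {x | G.Reachable u x} u x
    simpa only [reachableIn_univ_iff] using (reachableIn_univ_iff.mpr hx).reachableIn_setOf
  | succ d => exact ReachableIn.reachableIn_setOf hx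

theorem reachableIn_basepoint (hu : u ∈ T) (hT : ∀ x ∈ T, ReachableIn G T u x) :
    ∀ x ∈ T, ReachableIn G T (basepoint T) x :=
  fun x hx => (hT _ (basepoint_mem ⟨u, hu⟩)).symm.trans (hT x hx)

theorem mem_band_min_level (hT : ∀ x ∈ T, ReachableIn G T (basepoint T) x) (huv : G.Adj u v)
    (hu : u ∈ T) (hv : v ∈ T) :
    u ∈ band G T (min (level G T u) (level G T v)) ∧
      v ∈ band G T (min (level G T u) (level G T v)) := by
  have : level G T v ≤ level G T u + 1 := (hT u hu).distIn_le_add_one huv hv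
  have : level G T u ≤ level G T v + 1 := (hT v hv).distIn_le_add_one huv.symm hu
  exact ⟨⟨hu, by omega⟩, ⟨hv, by omega⟩⟩

theorem mem_chain (huv : G.Adj u v) : ∀ d, u ∈ chain G u v d ∧ v ∈ chain G u v d
  | 0 => ⟨Reachable.refl u, huv.reachable⟩
  | d + 1 => by
    obtain ⟨hu, hv⟩ := mem_chain huv d
    obtain ⟨hub, hvb⟩ := mem_band_min_level
      (reachableIn_basepoint hu fun _ => reachableIn_chain) huv hu hv
    exact ⟨ReachableIn.refl hub, (ReachableIn.refl hub).concat huv hvb⟩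

theorem reachableIn_basepoint_chain (huv : G.Adj u v) :
    ∀ x ∈ chain G u v d, ReachableIn G (chain G u v d) (basepoint (chain G u v d)) x :=
  reachableIn_basepoint (mem_chain huv d).1 fun _ => reachableIn_chain

theorem chain_succ_eq {u' v' : V} (hd : chain G u v d = chain G u' v' d)
    (hl : edgeLevel G u v d = edgeLevel G u' v' d) (h : u' ∈ chain G u v (d + 1)) :
    chain G u v (d + 1) = chain G u' v' (d + 1) := by
  rw [chain_succ, chain_succ, ← hd, ← hl]
  exact ReachableIn.setOf_eq h

theorem chain_zero_eq (huv : G.Adj u v) : chain G u w 0 = chain G v z 0 :=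
  Set.ext fun _ => ⟨huv.reachable.symm.trans, huv.reachable.trans⟩

theorem chain_comm (huv : G.Adj u v) : ∀ d, chain G u v d = chain G v u d
  | 0 => chain_zero_eq huv
  | d + 1 => chain_succ_eq (chain_comm huv d)
      (by unfold edgeLevel; rw [chain_comm huv d, min_comm]) (mem_chain huv (d + 1)).2

theorem edgeLevel_comm (huv : G.Adj u v) (d : ℕ) : edgeLevel G u v d = edgeLevel G v u d := by
  unfold edgeLevel
  rw [chain_comm huv d, min_comm]

/-- Both edge levels lie in `{level v - 1, level v}`, so equality modulo `4` forces equality. -/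
theorem chain_eq_of_edgeLevel_mod_four (huv : G.Adj u v) (hvz : G.Adj v z)
    (h : ∀ d < σ, edgeLevel G u v d % 4 = edgeLevel G v z d % 4) :
    ∀ d ≤ σ, chain G u v d = chain G v z d
  | 0, _ => chain_zero_eq huv
  | d + 1, hd => by
    have ih := chain_eq_of_edgeLevel_mod_four huv hvz h d (by omega)
    have h₁ := (chain_succ_subset_band (mem_chain huv (d + 1)).2).2
    have h₂ := (chain_succ_subset_band (mem_chain hvz (d + 1)).1).2
    rw [← ih] at h₂
    have := h d (by omega)
    exact chain_succ_eq ih (by omega) (mem_chain huv (d + 1)).2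

end Chain

section Coloring

variable {V : Type*} [Nonempty V] {G : SimpleGraph V} {u v x y : V} {σ : ℕ}

theorem chain_antitone : Antitone (chain G u v) :=
  antitone_nat_of_succ_le fun _ _ hx => (chain_succ_subset_band hx).1

theorem isLayering_chain (huv : G.Adj u v) (hμ : ∀ d < σ, 2 ≤ edgeLevel G u v d) :
    IsLayering G σ (chain G u v) (fun d => basepoint (chain G u v d)) (edgeLevel G u v) where
  reachableIn _ _ := reachableIn_basepoint_chain huv
  subset_band _ _ _ hx := chain_succ_subset_band hx
  two_le := hμ

theorem dist_le_of_mem_chain_succ (huv : G.Adj u v) {d : ℕ} (hx : x ∈ chain G u v (d + 1))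
    (hy : y ∈ chain G u v (d + 1)) : G.dist x y ≤ 2 * (edgeLevel G u v d + 1) := by
  have hb := reachableIn_basepoint_chain huv (d := d)
  obtain ⟨hxd, hxl⟩ := chain_succ_subset_band hx
  obtain ⟨hyd, hyl⟩ := chain_succ_subset_band hy
  have := (hb x hxd).dist_le_distIn
  have := (hb y hyd).dist_le_distIn
  have := (hb y hyd).reachable.dist_triangle_right x
  rw [dist_comm (u := x) (v := basepoint _)] at this
  unfold level at hxl hyl
  omega

theorem dist_lt_of_mem_chain (hK : ¬ InducedMinor (completeBipartiteGraph (Fin σ) (Fin σ)) G)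
    (huv : G.Adj u v) (hx : x ∈ chain G u v σ) (hy : y ∈ chain G u v σ) : G.dist x y < 6 * σ := by
  by_cases! hμ : ∃ d < σ, edgeLevel G u v d < 2
  · obtain ⟨d, hd, hdl⟩ := hμ
    have := dist_le_of_mem_chain_succ huv (chain_antitone hd hx) (chain_antitone hd hy)
    omega
  · by_contra! hxy
    exact hK ((isLayering_chain huv hμ).inducedMinor hx hy hxy)

open Classical in
noncomputable def levelColoring (G : SimpleGraph V) (σ : ℕ) (u v : V) : Fin (4 ^ σ) :=
  if G.Adj u v then
    finFunctionFinEquiv fun d : Fin σ => ⟨edgeLevel G u v d % 4, Nat.mod_lt _ (by norm_num)⟩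
  else finFunctionFinEquiv 0

theorem levelColoring_comm (G : SimpleGraph V) (σ : ℕ) (u v : V) :
    levelColoring G σ u v = levelColoring G σ v u := by
  unfold levelColoring
  by_cases huv : G.Adj u v
  · simp only [huv, huv.symm, if_true, edgeLevel_comm huv]
  · rw [if_neg huv, if_neg (mt Adj.symm huv)]

theorem edgeLevel_mod_four_eq_of_levelColoring_eq {u' v' : V} (huv : G.Adj u v)
    (huv' : G.Adj u' v') (h : levelColoring G σ u v = levelColoring G σ u' v') (d : ℕ)
    (hd : d < σ) : edgeLevel G u v d % 4 = edgeLevel G u' v' d % 4 := by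
  simp only [levelColoring, huv, huv', if_true, EmbeddingLike.apply_eq_iff_eq] at h
  exact congrArg Fin.val (congrFun h ⟨d, hd⟩)

theorem mem_chain_of_mem_support {i : Fin (4 ^ σ)} :
    ∀ {y b : V} (p : (colorSub G (levelColoring G σ) i).Walk y b) {x : V},
      (colorSub G (levelColoring G σ) i).Adj x y → ∀ z ∈ p.support, z ∈ chain G x y σ
  | _, _, .nil, _, hxy, z, hz => by
    rw [Walk.support_nil, List.mem_singleton] at hz
    exact hz ▸ (mem_chain hxy.1 σ).2
  | _, _, .cons hyy' p, x, hxy, z, hz => by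
    rw [chain_eq_of_edgeLevel_mod_four hxy.1 hyy'.1 (edgeLevel_mod_four_eq_of_levelColoring_eq
      hxy.1 hyy'.1 (hxy.2.1.trans hyy'.2.1.symm)) σ le_rfl]
    rcases List.mem_cons.mp (Walk.support_cons _ _ ▸ hz) with rfl | hz
    · exact (mem_chain hyy'.1 σ).1
    · exact mem_chain_of_mem_support p hyy' z hz

end Coloring

/-- For all `σ ∈ ℕ⁺` there is `c = c(σ) ∈ ℕ⁺` such that every graph with no
induced minor isomorphic to `K_{σ,σ}` admits a `c`-edge-coloring of `G`-diameter less
than `12σ`. -/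
theorem statement13 (σ : ℕ) (hσ : 1 ≤ σ) :
    ∃ c : ℕ, 1 ≤ c ∧
      ∀ (V : Type) [Fintype V] (G : SimpleGraph V),
        ¬ InducedMinor (completeBipartiteGraph (Fin σ) (Fin σ)) G →
        ∃ F : V → V → Fin c, (∀ u v : V, F u v = F v u) ∧
          ∀ (i : Fin c) (a b : V), (colorSub G F i).Reachable a b →
            G.dist a b < 12 * σ := by
  refine ⟨4 ^ σ, Nat.one_le_pow _ _ (by norm_num), fun V _ G hK => ?_⟩
  rcases isEmpty_or_nonempty V with hV | hV
  · exact ⟨isEmptyElim, fun u => isEmptyElim u, fun _ a => isEmptyElim a⟩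
  refine ⟨levelColoring G σ, levelColoring_comm G σ, fun i a b ⟨p⟩ => ?_⟩
  cases p with
  | nil => simp only [dist_self]; omega
  | cons hab p =>
    have := dist_lt_of_mem_chain hK hab.1 (mem_chain hab.1 σ).1
      (mem_chain_of_mem_support p hab b p.end_mem_support)
    omega
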